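/- arXiv:1405.0726 — 4 statements merged into one kernel-verified Lean document; each statement's English description precedes it below -/
import Mathlib

section
/- Let G be a group, H ≤ G a subgroup, and G₀ ≤ G a finite-index subgroup. Then the height of H₀ = H ∩ G₀ in G₀ is at most the height of H in G. -/
/-- `H` has height at least `n` in `G` : there are `n` distinct cosets `gᵢH` such that
the intersection of conjugates `⋂ᵢ gᵢ H gᵢ⁻¹` is infinite. -/
def heightAtLeast {G : Type*} [Group G] (H : Subgroup G) (n : ℕ) : Prop :=
  ∃ g : Fin n → G, (∀ i j : Fin n, (g i)⁻¹ * g j ∈ H → i = j) ∧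
    {x : G | ∀ i : Fin n, (g i)⁻¹ * x * g i ∈ H}.Infinite

/-- The height of `H` in `G`: the largest `n ≥ 0` such that there are `n` distinct cosets
with infinite intersection of conjugates (height `0` if no such `n ≥ 1` exists). -/
noncomputable def height {G : Type*} [Group G] (H : Subgroup G) : ℕ∞ :=
  sSup {n : ℕ∞ | n = 0 ∨ ∃ m : ℕ, n = (m : ℕ∞) ∧ heightAtLeast H m}

lemma heightAtLeast_of_subgroupOf {G : Type*} [Group G] (H G₀ : Subgroup G) (m : ℕ)
    (h : heightAtLeast ((H ⊓ G₀).subgroupOf G₀) m) : heightAtLeast H m := by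
  obtain ⟨g, hdist, hinf⟩ := h
  refine ⟨fun i => (g i : G), ?_, ?_⟩
  · intro i j hij
    apply hdist
    rw [Subgroup.mem_subgroupOf]
    exact ⟨hij, (Subgroup.mul_mem _ (Subgroup.inv_mem _ (g i).2) (g j).2)⟩
  · have : ((↑) : G₀ → G) '' {x : G₀ | ∀ i : Fin m, (g i)⁻¹ * x * g i ∈
        (H ⊓ G₀).subgroupOf G₀} ⊆ {x : G | ∀ i : Fin m, ((g i : G))⁻¹ * x * (g i : G) ∈ H} := by
      rintro _ ⟨y, hy, rfl⟩ i
      have := hy i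
      rw [Subgroup.mem_subgroupOf] at this
      exact this.1
    exact (hinf.image Subtype.val_injective.injOn).mono this

theorem stmt1 {G : Type*} [Group G] (H G₀ : Subgroup G) (hfi : G₀.FiniteIndex) :
    height ((H ⊓ G₀).subgroupOf G₀) ≤ height H := by
  apply sSup_le_sSup
  rintro n (rfl | ⟨m, rfl, hm⟩)
  · exact Or.inl rfl
  · exact Or.inr ⟨m, rfl, heightAtLeast_of_subgroupOf H G₀ m hm⟩
end

section
/- Let X be a δ-hyperbolic geodesic metric space and l ≥ 0. Let c = c₁⋯cₙ be a path from p to q with vertices p = p₁, p₂, …, p_{n+1} = q such that: (1) each cᵢ is a geodesic segment [pᵢ, p_{i+1}]; (2) for each 1 < i ≤ n the Gromov product (p_{i−1}, p_{i+1})_{pᵢ} ≤ l; and (3) for each i ∉ {1, n} the length of cᵢ is strictly greater than 2l + 8δ. Then for any geodesic γ from p to q, the Hausdorff distance between γ and (the image of) c is at most l + 5δ. -/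
open Set

variable {X : Type*} [MetricSpace X]

/-- `f` is a geodesic segment from `x` to `y`, parametrized by arclength on `[0, dist x y]`. -/
def GeoSeg (f : ℝ → X) (x y : X) : Prop :=
  f 0 = x ∧ f (dist x y) = y ∧
    ∀ s ∈ Icc (0:ℝ) (dist x y), ∀ t ∈ Icc (0:ℝ) (dist x y), dist (f s) (f t) = |s - t|

/-- A geodesic metric space: any two points are joined by a geodesic segment. -/
def GeodesicMetricSpace (X : Type*) [MetricSpace X] : Prop :=
  ∀ x y : X, ∃ f : ℝ → X, GeoSeg f x y

/-- The Gromov product `(x,y)_p = (d(p,x)+d(p,y)-d(x,y))/2`. -/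
noncomputable def gprod (p x y : X) : ℝ := (dist p x + dist p y - dist x y) / 2

/-- All geodesic triangles of `X` are `δ`-thin: two sides issuing from a common vertex
`x` towards `y` and `z` stay `δ`-close up to the parameter `(y,z)_x` (the fibers of the
comparison map to the tripod have diameter at most `δ`). -/
def ThinTriangles (δ : ℝ) (X : Type*) [MetricSpace X] : Prop :=
  ∀ (x y z : X) (f g : ℝ → X), GeoSeg f x y → GeoSeg g x z →
    ∀ t ∈ Icc (0:ℝ) (gprod x y z), dist (f t) (g t) ≤ δ


lemma gprod_comm (p a b : X) : gprod p a b = gprod p b a := by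
  simp only [gprod, dist_comm a b]; ring

lemma gprod_nonneg (p a b : X) : 0 ≤ gprod p a b := by
  have h := dist_triangle a p b
  have h2 : dist a p = dist p a := dist_comm a p
  simp only [gprod]; linarith

lemma gprod_le_left (p a b : X) : gprod p a b ≤ dist p a := by
  have h := dist_triangle p a b
  simp only [gprod]; linarith

lemma gprod_le_right (p a b : X) : gprod p a b ≤ dist p b := by
  have h := dist_triangle p b a
  have h2 : dist b a = dist a b := dist_comm b a
  simp only [gprod]; linarith

lemma gprod_self_left (p b : X) : gprod p p b = 0 := by
  simp [gprod]

lemma gprod_self_right (p a : X) : gprod p a p = 0 := by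
  simp [gprod, dist_comm p a]

lemma gprod_pair (p a : X) : gprod p a a = dist p a := by
  simp [gprod]

/-- `(a,q)_p + (a,p)_q = d(p,q)`. -/
lemma gprod_add (p a q : X) : gprod p a q + gprod q a p = dist p q := by
  have h1 : dist q a = dist a q := dist_comm q a
  have h2 : dist q p = dist p q := dist_comm q p
  have h3 : dist a p = dist p a := dist_comm a p
  simp only [gprod]; linarith

lemma GeoSeg.reverse {f : ℝ → X} {x y : X} (h : GeoSeg f x y) :
    GeoSeg (fun s => f (dist x y - s)) y x := by
  obtain ⟨h0, h1, hiso⟩ := h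
  have hd : dist y x = dist x y := dist_comm y x
  refine ⟨by simp [hd, h1], by simp [hd, h0], ?_⟩
  intro s hs t ht
  rw [hd] at hs ht
  rw [hiso _ ⟨by linarith [hs.2], by linarith [hs.1]⟩ _ ⟨by linarith [ht.2], by linarith [ht.1]⟩,
    show dist x y - s - (dist x y - t) = t - s by ring, abs_sub_comm]

lemma four_point {δ : ℝ} (hgeo : GeodesicMetricSpace X)
    (hthin : ThinTriangles δ X) (w a b c : X) :
    min (gprod w a b) (gprod w b c) ≤ gprod w a c + δ := by
  obtain ⟨fa, ha⟩ := hgeo w a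
  obtain ⟨fb, hb⟩ := hgeo w b
  obtain ⟨fc, hc⟩ := hgeo w c
  set t := min (gprod w a b) (gprod w b c) with htdef
  have ht0 : 0 ≤ t := le_min (gprod_nonneg _ _ _) (gprod_nonneg _ _ _)
  have h1 : dist (fa t) (fb t) ≤ δ := hthin w a b fa fb ha hb t ⟨ht0, min_le_left _ _⟩
  have h2 : dist (fb t) (fc t) ≤ δ := hthin w b c fb fc hb hc t ⟨ht0, min_le_right _ _⟩
  have hta : t ≤ dist w a := le_trans (min_le_left _ _) (gprod_le_left _ _ _)
  have htc : t ≤ dist w c := le_trans (min_le_right _ _) (gprod_le_right _ _ _)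
  have hfa : dist (fa t) a = dist w a - t := by
    have h := ha.2.2 t ⟨ht0, hta⟩ (dist w a) ⟨dist_nonneg, le_refl _⟩
    rw [ha.2.1] at h
    rw [h, abs_of_nonpos (by linarith)]; ring
  have hfc : dist (fc t) c = dist w c - t := by
    have h := hc.2.2 t ⟨ht0, htc⟩ (dist w c) ⟨dist_nonneg, le_refl _⟩
    rw [hc.2.1] at h
    rw [h, abs_of_nonpos (by linarith)]; ring
  have htri : dist a c ≤ dist a (fa t) + dist (fa t) (fc t) + dist (fc t) c := dist_triangle4 _ _ _ _
  have htri2 : dist (fa t) (fc t) ≤ dist (fa t) (fb t) + dist (fb t) (fc t) := dist_triangle _ _ _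
  have hca : dist a (fa t) = dist (fa t) a := dist_comm _ _
  simp only [gprod]
  linarith

lemma chainC {δ l : ℝ} (hδ : 0 ≤ δ) (hl : 0 ≤ l)
    (hFP : ∀ w a b c : X, min (gprod w a b) (gprod w b c) ≤ gprod w a c + δ)
    (n : ℕ) (x : ℕ → X)
    (hgp : ∀ j, 1 ≤ j → j + 1 ≤ n → gprod (x j) (x (j - 1)) (x (j + 1)) ≤ l)
    (hlen : ∀ j, 1 ≤ j → j + 2 ≤ n → dist (x j) (x (j + 1)) > 2 * l + 8 * δ) :
    ∀ k, k < n → gprod (x k) (x 0) (x (k + 1)) ≤ l + δ := by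
  intro k
  induction k using Nat.strong_induction_on with
  | _ k IH =>
    match k with
    | 0 =>
      intro _
      rw [gprod_self_left]
      linarith
    | 1 =>
      intro hk
      have h := hgp 1 (by omega) (by omega)
      norm_num at h
      linarith
    | (m+2) =>
      intro hk
      have hIH := IH (m+1) (by omega) (by omega)
      have hgp' := hgp (m+2) (by omega) (by omega)
      have hlen' := hlen (m+1) (by omega) (by omega)
      have e1 : m + 2 - 1 = m + 1 := by omega
      rw [e1] at hgp'
      have hid := gprod_add (x (m+1)) (x 0) (x (m+2))
      have hB : gprod (x (m+2)) (x 0) (x (m+1)) > l + δ := by linarith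
      have hmin := hFP (x (m+2)) (x (m+3)) (x 0) (x (m+1))
      have hc : gprod (x (m+2)) (x (m+3)) (x (m+1)) ≤ l := by
        rw [gprod_comm]; exact hgp'
      rcases min_le_iff.mp hmin with hA | hB' 
      · rw [gprod_comm]
        have : (m+2)+1 = m+3 := rfl
        rw [this]
        linarith
      · linarith

theorem stmt5 (δ l : ℝ) (hδ : 0 ≤ δ) (hl : 0 ≤ l)
    (hgeo : GeodesicMetricSpace X) (hthin : ThinTriangles δ X)
    (n : ℕ) (hn : 1 ≤ n) (x : ℕ → X) (f : ℕ → ℝ → X)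
    (hf : ∀ i < n, GeoSeg (f i) (x i) (x (i + 1)))
    (hgp : ∀ j, 1 ≤ j → j + 1 ≤ n → gprod (x j) (x (j - 1)) (x (j + 1)) ≤ l)
    (hlen : ∀ j, 1 ≤ j → j + 2 ≤ n → dist (x j) (x (j + 1)) > 2 * l + 8 * δ)
    (γ : ℝ → X) (hγ : GeoSeg γ (x 0) (x n)) :
    Metric.hausdorffDist (γ '' Icc (0:ℝ) (dist (x 0) (x n)))
      (⋃ j ∈ Finset.range n, f j '' Icc (0:ℝ) (dist (x j) (x (j + 1)))) ≤ l + 5 * δ := by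
  classical
  have hFP : ∀ w a b c : X, min (gprod w a b) (gprod w b c) ≤ gprod w a c + δ :=
    fun w a b c => four_point hgeo hthin w a b c
  have hC : ∀ k, k < n → gprod (x k) (x 0) (x (k + 1)) ≤ l + δ :=
    chainC hδ hl hFP n x hgp hlen
  -- reversed chain
  have hD : ∀ k, k < n → gprod (x (k+1)) (x n) (x k) ≤ l + δ := by
    have hmain := chainC hδ hl hFP n (fun i => x (n - i)) ?_ ?_
    · intro k hk
      have h2 := hmain (n - k - 1) (by omega)
      rw [show n - (n - k - 1) = k + 1 by omega, show n - (n - k - 1 + 1) = k by omega,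
        show n - 0 = n from rfl] at h2
      exact h2
    · intro j hj1 hj2
      have h := hgp (n - j) (by omega) (by omega)
      rw [gprod_comm] at h
      rw [show n - (j - 1) = n - j + 1 by omega, show n - (j + 1) = n - j - 1 by omega]
      exact h
    · intro j hj1 hj2
      have h := hlen (n - j - 1) (by omega) (by omega)
      rw [show n - j - 1 + 1 = n - j by omega] at h
      rw [show n - (j + 1) = n - j - 1 by omega, dist_comm]
      exact h
  -- Gromov product of the endpoints at each vertex
  have hE : ∀ k, k ≤ n → gprod (x k) (x 0) (x n) ≤ l + 2*δ := by
    intro k hk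
    match k with
    | 0 => rw [gprod_self_left]; linarith
    | (m+1) =>
      rcases eq_or_lt_of_le hk with hkn | hkn
      · rw [hkn, gprod_self_right]; linarith
      · -- 1 ≤ m+1 ≤ n-1
        match m with
        | 0 =>
          rcases eq_or_lt_of_le (show 2 ≤ n by omega) with hn2 | hn3
          · have h := hgp 1 (by omega) (by omega)
            norm_num at h
            rw [← hn2]
            linarith
          · -- n ≥ 3
            have hid := gprod_add (x 2) (x n) (x 1)
            have hd1 := hD 1 (by omega)
            have hlen1 := hlen 1 (by omega) (by omega)
            have hd12 : dist (x 2) (x 1) = dist (x 1) (x 2) := dist_comm _ _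
            have hB : gprod (x 1) (x n) (x 2) > l + δ := by linarith
            have hmin := hFP (x 1) (x 0) (x n) (x 2)
            have hgp1 := hgp 1 (by omega) (by omega)
            norm_num at hgp1
            rcases min_le_iff.mp hmin with hA | hB' <;> linarith
        | (m'+1) =>
          -- k = m'+2 ≥ 2
          have hCk := hC (m'+1) (by omega)
          have hlenk := hlen (m'+1) (by omega) (by omega)
          have hid := gprod_add (x (m'+1)) (x 0) (x (m'+2))
          have hB : gprod (x (m'+2)) (x 0) (x (m'+1)) > l + 2*δ := by linarith
          have hDk := hD (m'+1) (by omega)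
          have hc : gprod (x (m'+2)) (x n) (x (m'+1)) ≤ l + δ := hDk
          have hmin := hFP (x (m'+2)) (x n) (x 0) (x (m'+1))
          rcases min_le_iff.mp hmin with hA | hB'
          · rw [gprod_comm]; linarith
          · linarith
  -- every point of a geodesic from x0 to x m is close to γ
  have hAlpha : ∀ m, m ≤ n → ∀ (α : ℝ → X), GeoSeg α (x 0) (x m) →
      ∀ t, t ∈ Icc (0:ℝ) (dist (x 0) (x m)) →
      ∃ s ∈ Icc (0:ℝ) (dist (x 0) (x n)), dist (α t) (γ s) ≤ l + 3*δ := by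
    intro m hm α hα t ht
    have hsm0 : 0 ≤ gprod (x 0) (x m) (x n) := gprod_nonneg _ _ _
    have hsmD : gprod (x 0) (x m) (x n) ≤ dist (x 0) (x n) := gprod_le_right _ _ _
    have hsma : gprod (x 0) (x m) (x n) ≤ dist (x 0) (x m) := gprod_le_left _ _ _
    rcases le_or_gt t (gprod (x 0) (x m) (x n)) with h | h
    · refine ⟨t, ⟨ht.1, le_trans h hsmD⟩, ?_⟩
      have := hthin (x 0) (x m) (x n) α γ hα hγ t ⟨ht.1, h⟩
      linarith
    · refine ⟨gprod (x 0) (x m) (x n), ⟨hsm0, hsmD⟩, ?_⟩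
      have h1 : dist (α t) (α (gprod (x 0) (x m) (x n))) = t - gprod (x 0) (x m) (x n) := by
        rw [hα.2.2 t ht _ ⟨hsm0, hsma⟩, abs_of_nonneg (by linarith)]
      have h2 : dist (α (gprod (x 0) (x m) (x n))) (γ (gprod (x 0) (x m) (x n))) ≤ δ :=
        hthin (x 0) (x m) (x n) α γ hα hγ _ ⟨hsm0, le_refl _⟩
      have hid := gprod_add (x 0) (x n) (x m)
      have hc1 : gprod (x 0) (x n) (x m) = gprod (x 0) (x m) (x n) := gprod_comm _ _ _
      have hc2 : gprod (x m) (x n) (x 0) = gprod (x m) (x 0) (x n) := gprod_comm _ _ _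
      have hEm := hE m hm
      have htri := dist_triangle (α t) (α (gprod (x 0) (x m) (x n))) (γ (gprod (x 0) (x m) (x n)))
      have htm : t ≤ dist (x 0) (x m) := ht.2
      linarith
  apply Metric.hausdorffDist_le_of_mem_dist (by linarith)
  · -- points of γ are close to the broken path
    rintro p ⟨t, ht, rfl⟩
    set P : ℕ → Prop := fun k => gprod (x 0) (x k) (x n) ≤ t with hPdef
    have hP0 : P 0 := by simp only [hPdef, gprod_self_left]; exact ht.1
    set K := Nat.findGreatest P n with hKdef
    have hPK : P K := Nat.findGreatest_spec (Nat.zero_le n) hP0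
    have hKle : K ≤ n := Nat.findGreatest_le n
    rcases eq_or_lt_of_le hKle with hKn | hKn
    · -- K = n : then t = dist (x 0) (x n), γ t = x n
      have hPn : P n := by rw [hKn] at hPK; exact hPK
      simp only [hPdef, gprod_pair] at hPn
      have htD : t = dist (x 0) (x n) := le_antisymm ht.2 hPn
      refine ⟨f (n-1) (dist (x (n-1)) (x (n-1+1))), ?_, ?_⟩
      · exact Set.mem_biUnion (Finset.mem_range.mpr (by omega))
          (Set.mem_image_of_mem _ ⟨dist_nonneg, le_refl _⟩)
      · rw [(hf (n-1) (by omega)).2.1, htD, hγ.2.1, show n - 1 + 1 = n by omega, dist_self]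
        linarith
    · -- K < n
      have hnotP : ¬ P (K+1) := Nat.findGreatest_is_greatest (n := n) (k := K + 1) (by omega) (by omega)
      simp only [hPdef, not_le] at hnotP
      have hPK' : gprod (x 0) (x K) (x n) ≤ t := hPK
      obtain ⟨α, hα⟩ := hgeo (x 0) (x K)
      obtain ⟨β, hβ⟩ := hgeo (x 0) (x (K+1))
      have hfK := hf K hKn
      have h1 : dist (γ t) (β t) ≤ δ := by
        have := hthin (x 0) (x n) (x (K+1)) γ β hγ hβ t
          ⟨ht.1, by rw [gprod_comm]; linarith⟩
        exact this
      rcases le_or_gt t (gprod (x 0) (x (K+1)) (x K)) with hu | hu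
      · -- close to the vertex x K
        have h2 : dist (β t) (α t) ≤ δ :=
          hthin (x 0) (x (K+1)) (x K) β α hβ hα t ⟨ht.1, hu⟩
        have hua : gprod (x 0) (x (K+1)) (x K) ≤ dist (x 0) (x K) := gprod_le_right _ _ _
        have h3 : dist (α t) (x K) = dist (x 0) (x K) - t := by
          have h := hα.2.2 t ⟨ht.1, by linarith⟩ (dist (x 0) (x K)) ⟨dist_nonneg, le_refl _⟩
          rw [hα.2.1] at h
          rw [h, abs_of_nonpos (by linarith)]; ring
        have hid := gprod_add (x 0) (x n) (x K)
        have hc1 : gprod (x 0) (x n) (x K) = gprod (x 0) (x K) (x n) := gprod_comm _ _ _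
        have hc2 : gprod (x K) (x n) (x 0) = gprod (x K) (x 0) (x n) := gprod_comm _ _ _
        have hEK := hE K (le_of_lt hKn)
        refine ⟨f K 0, ?_, ?_⟩
        · exact Set.mem_biUnion (Finset.mem_range.mpr hKn)
            (Set.mem_image_of_mem _ ⟨le_refl _, dist_nonneg⟩)
        · rw [hfK.1]
          have htri := dist_triangle4 (γ t) (β t) (α t) (x K)
          linarith
      · -- close to the segment f K
        have hid := gprod_add (x 0) (x K) (x (K+1))
        have hc1 : gprod (x 0) (x K) (x (K+1)) = gprod (x 0) (x (K+1)) (x K) := gprod_comm _ _ _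
        have hc2 : gprod (x (K+1)) (x K) (x 0) = gprod (x (K+1)) (x 0) (x K) := gprod_comm _ _ _
        have hta : t ≤ dist (x 0) (x (K+1)) := by
          have := gprod_le_left (x 0) (x (K+1)) (x n)
          linarith
        have hwg : dist (x 0) (x (K+1)) - t ≤ gprod (x (K+1)) (x 0) (x K) := by linarith
        have hw0 : (0:ℝ) ≤ dist (x 0) (x (K+1)) - t := by linarith
        have h2 := hthin (x (K+1)) (x 0) (x K) _ _ hβ.reverse hfK.reverse
          (dist (x 0) (x (K+1)) - t) ⟨hw0, hwg⟩
        rw [show dist (x 0) (x (K+1)) - (dist (x 0) (x (K+1)) - t) = t by ring] at h2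
        have hwd : dist (x 0) (x (K+1)) - t ≤ dist (x K) (x (K+1)) := by
          have := gprod_le_right (x (K+1)) (x 0) (x K)
          have hdc : dist (x (K+1)) (x K) = dist (x K) (x (K+1)) := dist_comm _ _
          linarith
        refine ⟨f K (dist (x K) (x (K+1)) - (dist (x 0) (x (K+1)) - t)), ?_, ?_⟩
        · exact Set.mem_biUnion (Finset.mem_range.mpr hKn)
            (Set.mem_image_of_mem _ ⟨by linarith, by linarith⟩)
        · have htri := dist_triangle (γ t) (β t) (f K (dist (x K) (x (K+1)) - (dist (x 0) (x (K+1)) - t)))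
          linarith
  · -- points of the broken path are close to γ
    intro p hp
    simp only [Set.mem_iUnion, Finset.mem_range] at hp
    obtain ⟨k, hk, r, hr, rfl⟩ := hp
    obtain ⟨α, hα⟩ := hgeo (x 0) (x k)
    obtain ⟨β, hβ⟩ := hgeo (x 0) (x (k+1))
    have hfk := hf k hk
    have hid := gprod_add (x k) (x 0) (x (k+1))
    rcases le_or_gt r (gprod (x k) (x (k+1)) (x 0)) with hv | hv
    · have h1 := hthin (x k) (x (k+1)) (x 0) _ _ hfk hα.reverse r ⟨hr.1, hv⟩
      have hra : r ≤ dist (x 0) (x k) := by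
        have h := gprod_le_right (x k) (x (k+1)) (x 0)
        have hdc : dist (x k) (x 0) = dist (x 0) (x k) := dist_comm _ _
        linarith
      obtain ⟨s, hs, h2⟩ := hAlpha k (le_of_lt hk) α hα (dist (x 0) (x k) - r)
        ⟨by linarith, by linarith [hr.1]⟩
      refine ⟨γ s, ⟨s, hs, rfl⟩, ?_⟩
      have htri := dist_triangle (f k r) (α (dist (x 0) (x k) - r)) (γ s)
      linarith
    · have hc1 : gprod (x k) (x (k+1)) (x 0) = gprod (x k) (x 0) (x (k+1)) := gprod_comm _ _ _
      have hwg : dist (x k) (x (k+1)) - r ≤ gprod (x (k+1)) (x 0) (x k) := by linarith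
      have h1 := hthin (x (k+1)) (x k) (x 0) _ _ hfk.reverse hβ.reverse
        (dist (x k) (x (k+1)) - r) ⟨by linarith [hr.2], by rw [gprod_comm]; exact hwg⟩
      rw [show dist (x k) (x (k+1)) - (dist (x k) (x (k+1)) - r) = r by ring] at h1
      have hwa : dist (x k) (x (k+1)) - r ≤ dist (x 0) (x (k+1)) := by
        have h := gprod_le_right (x (k+1)) (x 0) (x k)
        have h2 := gprod_le_left (x (k+1)) (x 0) (x k)
        have hdc : dist (x (k+1)) (x 0) = dist (x 0) (x (k+1)) := dist_comm _ _
        linarith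
      obtain ⟨s, hs, h2⟩ := hAlpha (k+1) hk β hβ
        (dist (x 0) (x (k+1)) - (dist (x k) (x (k+1)) - r))
        ⟨by linarith, by linarith [hr.2]⟩
      refine ⟨γ s, ⟨s, hs, rfl⟩, ?_⟩
      have htri := dist_triangle (f k r)
        (β (dist (x 0) (x (k+1)) - (dist (x k) (x (k+1)) - r))) (γ s)
      linarith
end

section
/- Let X be a δ-hyperbolic geodesic metric space. There is no closed path σ in X which is a concatenation of n ≥ 1 geodesic segments, each of length strictly greater than 12δ, such that at every vertex of σ (including the basepoint, viewing σ as a cyclic concatenation) the Gromov product of the two adjacent vertices at that vertex is at most δ. -/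
open Set

variable {X : Type*} [MetricSpace X]

lemma fourpoint (δ : ℝ) (hgeo : GeodesicMetricSpace X)
    (hthin : ThinTriangles δ X) (w a b c : X) :
    min (gprod w a b) (gprod w b c) - δ ≤ gprod w a c := by
  obtain ⟨f, hf⟩ := hgeo w a
  obtain ⟨g, hg⟩ := hgeo w b
  obtain ⟨h, hh⟩ := hgeo w c
  set t := min (gprod w a b) (gprod w b c) with ht
  have ht0 : 0 ≤ t := le_min (gprod_nonneg _ _ _) (gprod_nonneg _ _ _)
  have h1 : dist (f t) (g t) ≤ δ :=
    hthin w a b f g hf hg t ⟨ht0, min_le_left _ _⟩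
  have h2 : dist (g t) (h t) ≤ δ :=
    hthin w b c g h hg hh t ⟨ht0, min_le_right _ _⟩
  have hta : t ≤ dist w a := le_trans (min_le_left _ _) (gprod_le_left _ _ _)
  have htc : t ≤ dist w c := le_trans (min_le_right _ _) (gprod_le_right _ _ _)
  have hfa : dist a (f t) = dist w a - t := by
    have := hf.2.2 (dist w a) ⟨dist_nonneg, le_refl _⟩ t ⟨ht0, hta⟩
    rw [hf.2.1] at this
    rw [this, abs_of_nonneg (by linarith)]
  have hhc : dist (h t) c = dist w c - t := by
    have := hh.2.2 t ⟨ht0, htc⟩ (dist w c) ⟨dist_nonneg, le_refl _⟩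
    rw [hh.2.1] at this
    rw [this, abs_of_nonpos (by linarith), neg_sub]
  have htri1 : dist a c ≤ dist a (f t) + dist (f t) (h t) + dist (h t) c :=
    dist_triangle4 _ _ _ _
  have htri2 : dist (f t) (h t) ≤ dist (f t) (g t) + dist (g t) (h t) :=
    dist_triangle _ _ _
  unfold gprod
  linarith

theorem stmt6 (δ : ℝ) (hδ : 0 ≤ δ) (hgeo : GeodesicMetricSpace X)
    (hthin : ThinTriangles δ X)
    (n : ℕ) (hn : 1 ≤ n) (x : ZMod n → X) (f : ZMod n → ℝ → X)
    (hf : ∀ i, GeoSeg (f i) (x i) (x (i + 1)))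
    (hlen : ∀ i, dist (x i) (x (i + 1)) > 12 * δ)
    (hgp : ∀ i, gprod (x i) (x (i - 1)) (x (i + 1)) ≤ δ) :
    False := by
  have key : ∀ k : ℕ, 1 ≤ k →
      6 * δ * k < dist (x 0) (x (k : ZMod n)) ∧
      gprod (x (k : ZMod n)) (x 0) (x ((k + 1 : ℕ) : ZMod n)) ≤ 3 * δ := by
    intro k hk
    induction k, hk using Nat.le_induction with
    | base =>
      constructor
      · have h0 := hlen 0
        have : ((1 : ℕ) : ZMod n) = (0 : ZMod n) + 1 := by push_cast; ring
        rw [this]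
        push_cast
        linarith
      · have h1 := hgp ((1 : ℕ) : ZMod n)
        have e1 : ((1 : ℕ) : ZMod n) - 1 = (0 : ZMod n) := by push_cast; ring
        have e2 : ((1 : ℕ) : ZMod n) + 1 = ((1 + 1 : ℕ) : ZMod n) := by push_cast; ring
        rw [e1, e2] at h1
        linarith
    | succ k hk ih =>
      obtain ⟨ihd, ihg⟩ := ih
      have ekk : ((k + 1 : ℕ) : ZMod n) = (k : ZMod n) + 1 := by push_cast; ring
      have hlk := hlen ((k : ℕ) : ZMod n)
      rw [← ekk] at hlk
      -- distance growth
      have hdist : 6 * δ * (k + 1 : ℕ) < dist (x 0) (x ((k + 1 : ℕ) : ZMod n)) := by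
        have hid : gprod (x (k : ZMod n)) (x 0) (x ((k + 1 : ℕ) : ZMod n)) =
            (dist (x (k : ZMod n)) (x 0) + dist (x (k : ZMod n)) (x ((k + 1 : ℕ) : ZMod n))
              - dist (x 0) (x ((k + 1 : ℕ) : ZMod n))) / 2 := rfl
        have hc : dist (x (k : ZMod n)) (x 0) = dist (x 0) (x (k : ZMod n)) := dist_comm _ _
        have hc2 : ((k + 1 : ℕ) : ℝ) = (k : ℝ) + 1 := by push_cast; ring
        rw [hc2]
        linarith
      refine ⟨hdist, ?_⟩
      -- Gromov product bound at vertex k+1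
      have h4 := fourpoint δ hgeo hthin (x ((k + 1 : ℕ) : ZMod n)) (x (k : ZMod n)) (x 0)
        (x ((k + 2 : ℕ) : ZMod n))
      have hgpk := hgp ((k + 1 : ℕ) : ZMod n)
      have e1 : ((k + 1 : ℕ) : ZMod n) - 1 = (k : ZMod n) := by push_cast; ring
      have e2 : ((k + 1 : ℕ) : ZMod n) + 1 = ((k + 2 : ℕ) : ZMod n) := by push_cast; ring
      rw [e1, e2] at hgpk
      -- gprod w (x k) (x (k+2)) = gprod w (x (k-1... trivial symm handling
      have hsym : gprod (x ((k + 1 : ℕ) : ZMod n)) (x (k : ZMod n)) (x ((k + 2 : ℕ) : ZMod n)) =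
          gprod (x ((k + 1 : ℕ) : ZMod n)) (x (k : ZMod n)) (x ((k + 2 : ℕ) : ZMod n)) := rfl
      have ha : gprod (x ((k + 1 : ℕ) : ZMod n)) (x (k : ZMod n)) (x 0) >
          2 * δ := by
        -- = dist (x k) (x (k+1)) - gprod (x k) (x 0) (x (k+1))
        have hid1 : gprod (x ((k + 1 : ℕ) : ZMod n)) (x (k : ZMod n)) (x 0) +
            gprod (x (k : ZMod n)) (x 0) (x ((k + 1 : ℕ) : ZMod n)) =
            dist (x (k : ZMod n)) (x ((k + 1 : ℕ) : ZMod n)) := by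
          unfold gprod
          have c1 : dist (x ((k + 1 : ℕ) : ZMod n)) (x (k : ZMod n)) =
              dist (x (k : ZMod n)) (x ((k + 1 : ℕ) : ZMod n)) := dist_comm _ _
          have c2 : dist (x ((k + 1 : ℕ) : ZMod n)) (x 0) =
              dist (x 0) (x ((k + 1 : ℕ) : ZMod n)) := dist_comm _ _
          have c3 : dist (x (k : ZMod n)) (x 0) = dist (x 0) (x (k : ZMod n)) := dist_comm _ _
          linarith
        linarith
      have hmin := min_le_iff.mp (by linarith :
        min (gprod (x ((k + 1 : ℕ) : ZMod n)) (x (k : ZMod n)) (x 0))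
          (gprod (x ((k + 1 : ℕ) : ZMod n)) (x 0) (x ((k + 2 : ℕ) : ZMod n))) ≤ 2 * δ)
      rcases hmin with hm | hm
      · linarith
      · have e3 : ((k + 1 : ℕ) + 1 : ℕ) = (k + 2 : ℕ) := by ring
        rw [e3]
        linarith
  obtain ⟨hd, -⟩ := key n hn
  rw [ZMod.natCast_self] at hd
  simp at hd
  have : (0:ℝ) ≤ 6 * δ * n := by positivity
  linarith
end

section
/- Let A and B be virtually torsion-free groups and let C be a finite group with injective homomorphisms C → A and C → B. Then the amalgamated free product G = A *_C B is virtually torsion-free. -/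
/-!
An element of finite order in an amalgamated product is conjugate into a factor: writing it as
`base h * w` with `w` a reduced word, conjugation either shortens `w` or makes it cyclically
reduced, and a nonempty cyclically reduced word has infinite order because its powers are
reduced words again.

Let `N_A ≤ A` and `N_B ≤ B` be torsion-free of finite index. The finite group `C` acts freely on
`X = A/N_A × B/N_B` both through `A` and through `B`, and two free actions of a finite group on
the same finite set are conjugate. After conjugating the action of `A`, the two actions agree on
`C` and define `A *_C B → Sym X`. Its kernel has finite index, and a torsion element of the kernel
is conjugate to some `a` in a factor acting trivially on `X`, so `a` fixes a coset of the
torsion-free `N_A` (or `N_B`) and is trivial.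
-/

/-- A group is virtually torsion-free if it has a torsion-free subgroup of finite index. -/
def VirtuallyTorsionFree (G : Type) [Group G] : Prop :=
  ∃ H : Subgroup G, H.FiniteIndex ∧ ∀ x : G, x ∈ H → IsOfFinOrder x → x = 1

universe u

theorem isConj_mul_comm {α : Type*} [Group α] (a b : α) : IsConj (a * b) (b * a) :=
  isConj_iff.2 ⟨b, by group⟩

namespace Monoid.PushoutI

open CoprodI

variable {ι H : Type*} {G : ι → Type*} [Group H] [∀ i, Group (G i)] {φ : ∀ i, H →* G i}

variable (φ) in
def listProd (l : List (Σ i, G i)) : PushoutI φ :=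
  (l.map fun a => of a.1 a.2).prod

@[simp]
theorem listProd_nil : listProd φ [] = 1 := rfl

@[simp]
theorem listProd_cons (a : Σ i, G i) (l : List (Σ i, G i)) :
    listProd φ (a :: l) = of a.1 a.2 * listProd φ l := by
  simp [listProd]

@[simp]
theorem listProd_append (l₁ l₂ : List (Σ i, G i)) :
    listProd φ (l₁ ++ l₂) = listProd φ l₁ * listProd φ l₂ := by
  simp [listProd]

theorem ofCoprodI_word_prod (w : Word G) : ofCoprodI w.prod = listProd φ w.toList := by
  simp [Word.prod, listProd, map_list_prod, Function.comp_def, ofCoprodI_of]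

variable (φ) in
def IsReducedList (l : List (Σ i, G i)) : Prop :=
  (∀ a ∈ l, a.2 ∉ (φ a.1).range) ∧ l.IsChain (fun a b => a.1 ≠ b.1)

theorem IsReducedList.append {l₁ l₂ : List (Σ i, G i)} (h₁ : IsReducedList φ l₁)
    (h₂ : IsReducedList φ l₂) (h : ∀ a ∈ l₁.getLast?, ∀ b ∈ l₂.head?, a.1 ≠ b.1) :
    IsReducedList φ (l₁ ++ l₂) :=
  ⟨fun a ha => (List.mem_append.1 ha).elim (h₁.1 a) (h₂.1 a), h₁.2.append h₂.2 h⟩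

theorem IsReducedList.infix {l₁ l : List (Σ i, G i)} (hl : IsReducedList φ l)
    (h : l₁ <:+: l) : IsReducedList φ l₁ :=
  ⟨fun a ha => hl.1 a (h.subset ha), hl.2.infix h⟩

theorem isReducedList_singleton {a : Σ i, G i} (ha : a.2 ∉ (φ a.1).range) :
    IsReducedList φ [a] :=
  ⟨by simpa using ha, List.isChain_singleton a⟩

theorem IsReducedList.replace_getLast {l : List (Σ i, G i)} {i : ι} {g g' : G i}
    (hl : IsReducedList φ (l ++ [⟨i, g⟩])) (hg' : g' ∉ (φ i).range) :
    IsReducedList φ (l ++ [⟨i, g'⟩]) := by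
  refine (hl.infix (List.prefix_append _ _).isInfix).append (isReducedList_singleton hg')
    fun x hx y hy => ?_
  obtain rfl : y = ⟨i, g'⟩ := by simpa [eq_comm] using hy
  exact (List.isChain_append.1 hl.2).2.2 x hx ⟨i, g⟩ rfl

theorem IsReducedList.listProd_ne_one (hφ : ∀ i, Function.Injective (φ i))
    {l : List (Σ i, G i)} (hl : IsReducedList φ l) (hne : l ≠ []) : listProd φ l ≠ 1 := by
  let w : Word G := ⟨l, fun a ha h1 => hl.1 a ha (h1 ▸ one_mem _), hl.2⟩
  intro h
  have : w = .empty := Reduced.eq_empty_of_mem_range hφ (w := w) hl.1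
    (by rw [ofCoprodI_word_prod, h]; exact one_mem _)
  exact hne (congrArg Word.toList this)

/-- The powers of a cyclically reduced word are again reduced words. -/
theorem IsReducedList.not_isOfFinOrder (hφ : ∀ i, Function.Injective (φ i))
    {l : List (Σ i, G i)} (hl : IsReducedList φ l) (hne : l ≠ [])
    (hcyc : ∀ a ∈ l.getLast?, ∀ b ∈ l.head?, a.1 ≠ b.1) : ¬IsOfFinOrder (listProd φ l) := by
  have hpow : ∀ n : ℕ, ∃ L, IsReducedList φ L ∧ L ≠ [] ∧ L.head? = l.head? ∧
      listProd φ l ^ (n + 1) = listProd φ L := by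
    intro n
    induction n with
    | zero => exact ⟨l, hl, hne, rfl, pow_one _⟩
    | succ n ih =>
      obtain ⟨L, hL, hLne, hLhead, hLprod⟩ := ih
      refine ⟨l ++ L, hl.append hL (hLhead ▸ hcyc), by simp [hne], ?_, ?_⟩
      · obtain ⟨a, t, rfl⟩ := List.exists_cons_of_ne_nil hne
        rfl
      · rw [pow_succ', hLprod, listProd_append]
  rw [isOfFinOrder_iff_pow_eq_one]
  rintro ⟨n, hn, hpow_one⟩
  obtain ⟨L, hL, hLne, -, hLprod⟩ := hpow (n - 1)
  rw [Nat.sub_add_cancel hn] at hLprod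
  exact hL.listProd_ne_one hφ hLne (hLprod ▸ hpow_one)

theorem exists_eq_base_mul_listProd (hφ : ∀ i, Function.Injective (φ i)) (x : PushoutI φ) :
    ∃ h l, IsReducedList φ l ∧ x = base φ h * listProd φ l := by
  classical
  obtain ⟨d⟩ := NormalWord.transversal_nonempty φ hφ
  let w := NormalWord.equiv (d := d) x
  refine ⟨w.head, w.toList, ⟨fun ⟨i, g⟩ hg hgφ => w.ne_one _ hg ?_, w.chain_ne⟩, ?_⟩
  · exact congrArg Subtype.val <|
      ((d.compl i).equiv_fst_eq_self_of_mem_of_one_mem (d.one_mem i) hgφ).symm.trans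
        ((d.compl i).equiv_fst_eq_one_of_mem_of_one_mem (one_mem _) (w.normalized i g hg))
  · rw [← ofCoprodI_word_prod, ← NormalWord.prod]
    exact (NormalWord.equiv.symm_apply_apply x).symm

theorem not_isOfFinOrder_base_mul_listProd (hφ : ∀ i, Function.Injective (φ i)) (h : H)
    {a b : Σ i, G i} {m : List (Σ i, G i)} (hl : IsReducedList φ (a :: m ++ [b]))
    (hab : a.1 ≠ b.1) : ¬IsOfFinOrder (base φ h * listProd φ (a :: m ++ [b])) := by
  have hb : b.2 * φ b.1 h ∉ (φ b.1).range := fun hmem =>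
    hl.1 b (by simp) ((Subgroup.mul_mem_cancel_right _ (by simp)).1 hmem)
  have hconj : IsConj (base φ h * listProd φ (a :: m ++ [b]))
      (listProd φ (a :: m ++ [⟨b.1, b.2 * φ b.1 h⟩])) := by
    have key : listProd φ (a :: m ++ [b]) * base φ h
        = listProd φ (a :: m ++ [⟨b.1, b.2 * φ b.1 h⟩]) := by
      simp [of_apply_eq_base, mul_assoc]
    exact key ▸ isConj_mul_comm _ _
  refine fun hfin => (hl.replace_getLast hb).not_isOfFinOrder hφ (by simp) ?_
    (hconj.isOfFinOrder hfin)
  simpa [List.getLast?_cons] using Ne.symm hab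

theorem isConj_base_mul_listProd_cons_append (h : H) {i : ι} (a b : G i)
    (m : List (Σ i, G i)) :
    IsConj (base φ h * listProd φ (⟨i, a⟩ :: (m ++ [⟨i, b⟩])))
      (listProd φ m * of i (b * φ i h * a)) := by
  have hx : base φ h * listProd φ (⟨i, a⟩ :: (m ++ [⟨i, b⟩]))
      = base φ h * of i a * (listProd φ m * of i b) := by
    simp [mul_assoc]
  have hy : listProd φ m * of i (b * φ i h * a)
      = listProd φ m * of i b * (base φ h * of i a) := by
    simp only [map_mul, of_apply_eq_base, mul_assoc]
  rw [hx, hy]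
  exact isConj_mul_comm _ _

/-- Conjugating shortens a word whose first and last letters lie in the same factor; a word
whose first and last letters lie in different factors has infinite order. -/
theorem exists_isConj_of_base_mul_listProd [Nonempty ι] (hφ : ∀ i, Function.Injective (φ i))
    (h : H) (l : List (Σ i, G i)) (hl : IsReducedList φ l)
    (hfin : IsOfFinOrder (base φ h * listProd φ l)) :
    ∃ i a, IsConj (base φ h * listProd φ l) (of i a) := by
  induction hn : l.length using Nat.strong_induction_on generalizing h l with
  | _ n ih =>
  rcases l with _ | ⟨⟨i, a⟩, t⟩
  · refine ⟨Classical.arbitrary ι, φ _ h, ?_⟩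
    rw [of_apply_eq_base, listProd_nil, mul_one]
  rcases t.eq_nil_or_concat' with rfl | ⟨m, ⟨j, b⟩, rfl⟩
  · refine ⟨i, φ i h * a, ?_⟩
    rw [map_mul, of_apply_eq_base, listProd_cons, listProd_nil, mul_one]
  obtain rfl : i = j := by
    by_contra hij
    exact not_isOfFinOrder_base_mul_listProd hφ h hl hij hfin
  have hconj := isConj_base_mul_listProd_cons_append (φ := φ) h a b m
  have hmb : IsReducedList φ (m ++ [⟨i, b⟩]) := hl.infix (List.suffix_cons _ _).isInfix
  by_cases hc : b * φ i h * a ∈ (φ i).range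
  · obtain ⟨h', hh'⟩ := hc
    have hconj' : IsConj (listProd φ m * of i (b * φ i h * a)) (base φ h' * listProd φ m) := by
      rw [← hh', of_apply_eq_base]
      exact isConj_mul_comm _ _
    obtain ⟨k, x, hx⟩ := ih m.length (by simp [← hn]) h' m
      (hmb.infix (List.prefix_append _ _).isInfix) ((hconj.trans hconj').isOfFinOrder hfin) rfl
    exact ⟨k, x, (hconj.trans hconj').trans hx⟩
  · have hconj' : IsConj (listProd φ m * of i (b * φ i h * a))
        (base φ 1 * listProd φ (m ++ [⟨i, b * φ i h * a⟩])) := by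
      simp only [map_one, one_mul, listProd_append, listProd_cons, listProd_nil, mul_one]
      exact IsConj.refl _
    obtain ⟨k, x, hx⟩ := ih _ (by simp [← hn]) 1 _ (hmb.replace_getLast hc)
      ((hconj.trans hconj').isOfFinOrder hfin) rfl
    exact ⟨k, x, (hconj.trans hconj').trans hx⟩

theorem exists_isConj_of_of_isOfFinOrder [Nonempty ι] (hφ : ∀ i, Function.Injective (φ i))
    {x : PushoutI φ} (hx : IsOfFinOrder x) : ∃ i a, IsConj x (of i a) := by
  obtain ⟨h, l, hl, rfl⟩ := exists_eq_base_mul_listProd hφ x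
  exact exists_isConj_of_base_mul_listProd hφ h l hl hx

end Monoid.PushoutI

section FreeAction

variable {C : Type*} {X : Type u} [Group C]

theorem exists_equiv_prod_of_free (ρ : C →* Equiv.Perm X) (hfree : ∀ c x, ρ c x = x → c = 1) :
    ∃ (T : Type u) (e : C × T ≃ X), ∀ c p, ρ c (e p) = e (c * p.1, p.2) := by
  let _ := MulAction.compHom X ρ
  have hsmul : ∀ (c : C) (x : X), c • x = ρ c x := fun _ _ => rfl
  let f : C × MulAction.orbitRel.Quotient C X → X := fun p => ρ p.1 p.2.out
  have hf : f.Bijective := by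
    refine ⟨fun ⟨c, t⟩ ⟨c', t'⟩ hcc => ?_, fun x => ?_⟩
    · change ρ c t.out = ρ c' t'.out at hcc
      obtain rfl : t = t' := by
        rw [← t.out_eq, ← t'.out_eq]
        exact Quotient.sound ⟨c⁻¹ * c', by simp [hsmul, ← hcc]⟩
      obtain rfl : c = c' := by
        refine (inv_mul_eq_one.1 (hfree (c'⁻¹ * c) t.out ?_)).symm
        simp [hcc]
      rfl
    · obtain ⟨c, hc⟩ := Quotient.mk_out (s := MulAction.orbitRel C X) x
      exact ⟨(c⁻¹, ⟦x⟧), by simp [f, ← hc, hsmul]⟩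
  exact ⟨_, .ofBijective f hf, fun c p => by simp [f]⟩

theorem exists_conj_comp_eq_of_free [Finite C] [Finite X] (ρ₁ ρ₂ : C →* Equiv.Perm X)
    (h₁ : ∀ c x, ρ₁ c x = x → c = 1) (h₂ : ∀ c x, ρ₂ c x = x → c = 1) :
    ∃ σ : Equiv.Perm X, (MulAut.conj σ).toMonoidHom.comp ρ₁ = ρ₂ := by
  obtain ⟨T₁, e₁, he₁⟩ := exists_equiv_prod_of_free ρ₁ h₁
  obtain ⟨T₂, e₂, he₂⟩ := exists_equiv_prod_of_free ρ₂ h₂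
  have := Finite.of_equiv _ e₁.symm
  have := Finite.of_equiv _ e₂.symm
  have := Finite.prod_right C (β := T₁)
  have := Finite.prod_right C (β := T₂)
  obtain ⟨τ⟩ : Nonempty (T₁ ≃ T₂) := by
    refine Finite.card_eq.1 (Nat.eq_of_mul_eq_mul_left (Nat.card_pos (α := C)) ?_)
    rw [← Nat.card_prod, ← Nat.card_prod, Nat.card_congr e₁, Nat.card_congr e₂]
  let σ : Equiv.Perm X := e₁.symm.trans (((Equiv.refl C).prodCongr τ).trans e₂)
  refine ⟨σ, MonoidHom.ext fun c => ?_⟩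
  rw [MonoidHom.comp_apply, MulEquiv.coe_toMonoidHom, MulAut.conj_apply, mul_inv_eq_iff_eq_mul]
  ext x
  obtain ⟨p, rfl⟩ := e₁.surjective x
  simp [σ, he₁, he₂]

end FreeAction

theorem eq_one_of_smul_eq_self_of_isOfFinOrder {A : Type*} [Group A] {N : Subgroup A}
    (hN : ∀ x ∈ N, IsOfFinOrder x → x = 1) {a : A} (ha : IsOfFinOrder a) {q : A ⧸ N}
    (hq : a • q = q) : a = 1 := by
  induction q using QuotientGroup.induction_on with
  | H g =>
  rw [MulAction.Quotient.smul_mk, smul_eq_mul, QuotientGroup.eq] at hq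
  have hconj : IsConj a⁻¹ ((a * g)⁻¹ * g) := isConj_iff.2 ⟨g⁻¹, by group⟩
  rw [hN _ hq (hconj.isOfFinOrder ha.inv), isConj_one_left, inv_eq_one] at hconj
  exact hconj

theorem VirtuallyTorsionFree.of_injective {G G' : Type} [Group G] [Group G']
    (h : VirtuallyTorsionFree G') (f : G →* G') (hf : Function.Injective f) :
    VirtuallyTorsionFree G := by
  obtain ⟨N, hN, htf⟩ := h
  have hfi : (N.comap f).FiniteIndex := Subgroup.finiteIndex_iff.2 <| by
    simpa using Subgroup.relIndex_comap_ne_zero f (K := ⊤) (by simpa using hN.index_ne_zero)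
  exact ⟨N.comap f, hfi, fun x hx hfin => hf (by simpa using htf _ hx (f.isOfFinOrder hfin))⟩

theorem Monoid.PushoutI.virtuallyTorsionFree {ι H : Type} {G : ι → Type} [Group H]
    [∀ i, Group (G i)] {φ : ∀ i, H →* G i} [Nonempty ι] (hφ : ∀ i, Function.Injective (φ i))
    {K : Type*} [Group K] [Finite K] (ψ : PushoutI φ →* K)
    (hψ : ∀ i a, IsOfFinOrder a → ψ (of i a) = 1 → a = 1) : VirtuallyTorsionFree (PushoutI φ) := by
  refine ⟨ψ.ker, inferInstance, fun x hx hfin => ?_⟩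
  obtain ⟨i, a, hxa⟩ := exists_isConj_of_of_isOfFinOrder hφ hfin
  have ha : IsOfFinOrder a := (of_injective hφ i).isOfFinOrder_iff.1 (hxa.isOfFinOrder hfin)
  have hψa : ψ (of i a) = 1 := by
    have := ψ.map_isConj hxa
    rwa [ψ.mem_ker.1 hx, isConj_one_right] at this
  rwa [hψ i a ha hψa, map_one, isConj_one_left] at hxa

def Equiv.Perm.prodCongrHom (α β : Type*) : Perm α × Perm β →* Perm (α × β) where
  toFun p := p.1.prodCongr p.2
  map_one' := rfl
  map_mul' _ _ := rfl

def BoolFamily (A B : Type) : Bool → Type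
  | true => A
  | false => B

instance BoolFamily.instGroup {A B : Type} [Group A] [Group B] : ∀ b, Group (BoolFamily A B b)
  | true => ‹Group A›
  | false => ‹Group B›

def BoolFamily.homTo {A B C : Type} [Group A] [Group B] [Group C] (f : C →* A) (g : C →* B) :
    ∀ b, C →* BoolFamily A B b
  | true => f
  | false => g

def BoolFamily.homFrom {A B K : Type} [Group A] [Group B] [Group K] (f : A →* K) (g : B →* K) :
    ∀ b, BoolFamily A B b →* K
  | true => f
  | false => g

/-- `A *_C B`, with `A` the factor `true` and `B` the factor `false`. -/
abbrev AmalgamatedProduct {A B C : Type} [Group A] [Group B] [Group C] (φA : C →* A)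
    (φB : C →* B) : Type :=
  Monoid.PushoutI (BoolFamily.homTo φA φB)

namespace AmalgamatedProduct

open Monoid

variable {A B C : Type} [Group A] [Group B] [Group C] {φA : C →* A} {φB : C →* B}

theorem virtuallyTorsionFree [Finite C] (hφA : Function.Injective φA)
    (hφB : Function.Injective φB) (hA : VirtuallyTorsionFree A) (hB : VirtuallyTorsionFree B) :
    VirtuallyTorsionFree (AmalgamatedProduct φA φB) := by
  obtain ⟨NA, hNA, hA⟩ := hA
  obtain ⟨NB, hNB, hB⟩ := hB
  let ρA : A →* Equiv.Perm ((A ⧸ NA) × (B ⧸ NB)) :=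
    (Equiv.Perm.prodCongrHom _ _).comp ((MulAction.toPermHom A (A ⧸ NA)).prod 1)
  let ρB : B →* Equiv.Perm ((A ⧸ NA) × (B ⧸ NB)) :=
    (Equiv.Perm.prodCongrHom _ _).comp ((1 : B →* _).prod (MulAction.toPermHom B (B ⧸ NB)))
  have hρA : ∀ a x, IsOfFinOrder a → ρA a x = x → a = 1 := fun a x ha hx =>
    eq_one_of_smul_eq_self_of_isOfFinOrder hA ha (congrArg Prod.fst hx)
  have hρB : ∀ b x, IsOfFinOrder b → ρB b x = x → b = 1 := fun b x hb hx =>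
    eq_one_of_smul_eq_self_of_isOfFinOrder hB hb (congrArg Prod.snd hx)
  have hfreeA : ∀ c x, ρA.comp φA c x = x → c = 1 := fun c x hx =>
    (map_eq_one_iff φA hφA).1 (hρA _ x (φA.isOfFinOrder (isOfFinOrder_of_finite c)) hx)
  have hfreeB : ∀ c x, ρB.comp φB c x = x → c = 1 := fun c x hx =>
    (map_eq_one_iff φB hφB).1 (hρB _ x (φB.isOfFinOrder (isOfFinOrder_of_finite c)) hx)
  obtain ⟨σ, hσ⟩ := exists_conj_comp_eq_of_free _ _ hfreeA hfreeB
  let ψ : AmalgamatedProduct φA φB →* Equiv.Perm ((A ⧸ NA) × (B ⧸ NB)) :=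
    PushoutI.lift (BoolFamily.homFrom ((MulAut.conj σ).toMonoidHom.comp ρA) ρB) (ρB.comp φB)
      (by rintro (_ | _); exacts [rfl, hσ])
  refine PushoutI.virtuallyTorsionFree (by rintro (_ | _); exacts [hφB, hφA]) ψ ?_
  let x₀ : (A ⧸ NA) × (B ⧸ NB) := ((1 : A), (1 : B))
  rintro (_ | _) a ha hψa <;> rw [PushoutI.lift_of] at hψa
  · change ρB a = 1 at hψa
    exact hρB a x₀ ha (by rw [hψa]; rfl)
  · change MulAut.conj σ (ρA a) = 1 at hψa
    rw [MulEquiv.map_eq_one_iff] at hψa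
    exact hρA a x₀ ha (by rw [hψa]; rfl)

theorem exists_injective_hom {G : Type} [Group G] (jA : A →* G) (jB : B →* G)
    (hcomm : jA.comp φA = jB.comp φB)
    (huniv : ∀ (H : Type) [Group H] (kA : A →* H) (kB : B →* H),
        kA.comp φA = kB.comp φB →
        ∃! f : G →* H, f.comp jA = kA ∧ f.comp jB = kB) :
    ∃ θ : G →* AmalgamatedProduct φA φB, Function.Injective θ := by
  let ιA : A →* AmalgamatedProduct φA φB := PushoutI.of (φ := BoolFamily.homTo φA φB) true
  let ιB : B →* AmalgamatedProduct φA φB := PushoutI.of (φ := BoolFamily.homTo φA φB) false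
  have hι : ιA.comp φA = ιB.comp φB :=
    (PushoutI.of_comp_eq_base true).trans (PushoutI.of_comp_eq_base false).symm
  obtain ⟨θ, ⟨hθA, hθB⟩, -⟩ := huniv _ ιA ιB hι
  have hj : ∀ b, (BoolFamily.homFrom jA jB b).comp (BoolFamily.homTo φA φB b) = jA.comp φA := by
    rintro (_ | _); exacts [hcomm.symm, rfl]
  let π : AmalgamatedProduct φA φB →* G := PushoutI.lift _ _ hj
  have hπθ : π.comp θ = MonoidHom.id G := by
    refine (huniv G jA jB hcomm).unique ⟨?_, ?_⟩ ⟨jA.id_comp, jB.id_comp⟩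
    · rw [MonoidHom.comp_assoc, hθA]
      exact MonoidHom.ext fun a => PushoutI.lift_of _ _ hj (i := true) a
    · rw [MonoidHom.comp_assoc, hθB]
      exact MonoidHom.ext fun b => PushoutI.lift_of _ _ hj (i := false) b
  exact ⟨θ, Function.LeftInverse.injective (g := π) (DFunLike.congr_fun hπθ)⟩

end AmalgamatedProduct

theorem stmt16 {A B C G : Type} [Group A] [Group B] [Group C] [Group G]
    [Finite C]
    (φA : C →* A) (φB : C →* B)
    (hφA : Function.Injective φA) (hφB : Function.Injective φB)
    (jA : A →* G) (jB : B →* G)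
    (hcomm : jA.comp φA = jB.comp φB)
    (huniv : ∀ (H : Type) [Group H] (kA : A →* H) (kB : B →* H),
        kA.comp φA = kB.comp φB →
        ∃! f : G →* H, f.comp jA = kA ∧ f.comp jB = kB)
    (hA : VirtuallyTorsionFree A) (hB : VirtuallyTorsionFree B) :
    VirtuallyTorsionFree G := by
  obtain ⟨θ, hθ⟩ := AmalgamatedProduct.exists_injective_hom jA jB hcomm huniv
  exact (AmalgamatedProduct.virtuallyTorsionFree hφA hφB hA hB).of_injective θ hθ
end
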